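/- arXiv:1910.02721 — 3 statements merged into one kernel-verified Lean document; each statement's English description precedes it below -/
import Mathlib

section
/- Let (T, θ) be a stratified staged tree. If every two vertices of T that are in the same stage are also in the same position (i.e. they additionally satisfy t(v) = t(w)), then (T, θ) is balanced. -/
open MvPolynomial

inductive STree (L : Type) where
  | leaf : STree L
  | node : List (L × STree L) → STree L

namespace STree

variable {L : Type}

def children : STree L → List (L × STree L)
  | .leaf => []
  | .node cs => cs

def paths : STree L → List (List L)
  | .leaf => [[]]
  | .node cs => cs.attach.flatMap (fun x => (paths x.1.2).map (fun p => x.1.1 :: p))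
termination_by t => sizeOf t
decreasing_by
  have h := List.sizeOf_lt_of_mem x.2
  obtain ⟨⟨l, c⟩, hm⟩ := x
  simp only [Prod.mk.sizeOf_spec] at h
  simp only [STree.node.sizeOf_spec]
  omega

noncomputable def tpoly (T : STree L) : MvPolynomial L ℝ :=
  ((paths T).map (fun p => (p.map X).prod)).sum

def outLabels (T : STree L) : List L := T.children.map Prod.fst

def SameStage (v w : STree L) : Prop := ∀ l, l ∈ v.outLabels ↔ l ∈ w.outLabels

inductive OccursAt : STree L → ℕ → STree L → Prop where
  | refl (T : STree L) : OccursAt T 0 T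
  | child {cs : List (L × STree L)} {l : L} {c v : STree L} {n : ℕ} :
      (l, c) ∈ cs → OccursAt c n v → OccursAt (.node cs) (n + 1) v

def IsStagedTree (T : STree L) : Prop :=
  (∀ n cs, OccursAt T n (.node cs) → cs ≠ [] ∧ (cs.map Prod.fst).Nodup) ∧
  (∀ n m v w, OccursAt T n v → OccursAt T m w →
    (SameStage v w ∨ ∀ l, ¬(l ∈ v.outLabels ∧ l ∈ w.outLabels)))

def Star (v w : STree L) : Prop :=
  ∀ l l' c c' d d', l ≠ l' →
    (l, c) ∈ v.children → (l', c') ∈ v.children →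
    (l, d) ∈ w.children → (l', d') ∈ w.children →
    tpoly c * tpoly d' = tpoly d * tpoly c'

def Balanced (T : STree L) : Prop :=
  ∀ n m v w, OccursAt T n v → OccursAt T m w → SameStage v w → Star v w

def Stratified (T : STree L) : Prop :=
  (∀ n m, OccursAt T n .leaf → OccursAt T m .leaf → n = m) ∧
  (∀ n m v w, OccursAt T n v → OccursAt T m w → SameStage v w → n = m)

end STree

/-!
In a stratified staged tree no label leaving a vertex `v` occurs in the subtrees below `v`:
such an occurrence would put a deeper vertex in the stage of `v`. Hence `t(v) = ∑ X_l t(v_l)`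
is linear in the variables of the stage of `v`, with coefficients free of them, and substituting
`0` for every stage label other than `l` turns `t(v) = t(w)` into `X_l t(v_l) = X_l t(w_l)`.
So two vertices in the same stage and position have children with equal interpolating
polynomials label by label, and (⋆) holds trivially.
-/

namespace STree

variable {L : Type}

theorem OccursAt.trans {a b u : STree L} {n m : ℕ}
    (hab : OccursAt a n b) (hbu : OccursAt b m u) : OccursAt a (n + m) u := by
  induction hab with
  | refl => simpa using hbu
  | child hm _ ih => simpa [Nat.add_right_comm] using OccursAt.child hm (ih hbu)

def UsesLabel (T : STree L) (a : L) : Prop := ∃ k u, OccursAt T k u ∧ a ∈ u.outLabels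

theorem tpoly_node (cs : List (L × STree L)) :
    tpoly (.node cs) = (cs.map fun x => X x.1 * tpoly x.2).sum := by
  unfold tpoly
  rw [paths, List.flatMap, List.map_flatten, List.sum_flatten, List.map_map, List.map_map]
  congr 1
  rw [← List.attach_map_val (l := cs)
    (f := fun x => X x.1 * (List.map (fun p => (List.map X p).prod) x.2.paths).sum)]
  refine List.map_congr_left fun a _ => ?_
  simp only [Function.comp_def, List.map_map]
  rw [← List.sum_map_mul_left]
  rfl

theorem usesLabel_of_mem_paths (T : STree L) {p : List L} {a : L}
    (hp : p ∈ paths T) (ha : a ∈ p) : T.UsesLabel a := by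
  match T with
  | .leaf =>
      simp only [paths, List.mem_singleton] at hp
      simp [hp] at ha
  | .node cs =>
      simp only [paths, List.mem_flatMap, List.mem_map] at hp
      obtain ⟨x, -, q, hq, rfl⟩ := hp
      rcases List.mem_cons.mp ha with rfl | ha
      · exact ⟨0, .node cs, .refl _, List.mem_map_of_mem x.2⟩
      · obtain ⟨k, u, hu, hau⟩ := usesLabel_of_mem_paths x.1.2 hq ha
        exact ⟨k + 1, u, .child x.2 hu, hau⟩
termination_by sizeOf T
decreasing_by
  have h := List.sizeOf_lt_of_mem x.2
  obtain ⟨⟨l, c⟩, hm⟩ := x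
  simp only [Prod.mk.sizeOf_spec] at h
  simp only [STree.node.sizeOf_spec]
  omega

theorem aeval_tpoly_eq_self (T : STree L) {σ : L → MvPolynomial L ℝ}
    (hσ : ∀ a, T.UsesLabel a → σ a = X a) : aeval σ (tpoly T) = tpoly T := by
  unfold tpoly
  rw [map_list_sum, List.map_map]
  refine congrArg List.sum (List.map_congr_left fun p hp => ?_)
  rw [Function.comp_apply, map_list_prod, List.map_map]
  refine congrArg List.prod (List.map_congr_left fun a ha => ?_)
  rw [Function.comp_apply, aeval_X, hσ a (usesLabel_of_mem_paths T hp ha)]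

theorem aeval_tpoly_node {cs : List (L × STree L)} {l : L} {c : STree L}
    {σ : L → MvPolynomial L ℝ} (hnd : (cs.map Prod.fst).Nodup) (hc : (l, c) ∈ cs)
    (hl : σ l = X l) (hzero : ∀ x ∈ cs, x.1 ≠ l → σ x.1 = 0)
    (hfix : ∀ a, c.UsesLabel a → σ a = X a) :
    aeval σ (tpoly (.node cs)) = X l * tpoly c := by
  classical
  rw [tpoly_node, map_list_sum, List.map_map, ← List.sum_toFinset _ (hnd.of_map _),
    Finset.sum_eq_single_of_mem (l, c) (List.mem_toFinset.mpr hc)]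
  · simp only [Function.comp_apply, map_mul, aeval_X, hl, aeval_tpoly_eq_self c hfix]
  · intro x hx hne
    have hxl : x.1 ≠ l := fun h =>
      hne (List.inj_on_of_nodup_map hnd (List.mem_toFinset.mp hx) hc h)
    simp only [Function.comp_apply, map_mul, aeval_X, hzero x (List.mem_toFinset.mp hx) hxl,
      zero_mul]

theorem tpoly_child_eq_of_tpoly_eq {v w c d : STree L} {l : L}
    (hv : v.outLabels.Nodup) (hw : w.outLabels.Nodup) (hvw : SameStage v w)
    (hfv : ∀ x ∈ v.children, ∀ a ∈ v.outLabels, ¬ x.2.UsesLabel a)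
    (hfw : ∀ x ∈ w.children, ∀ a ∈ w.outLabels, ¬ x.2.UsesLabel a)
    (heq : tpoly v = tpoly w) (hc : (l, c) ∈ v.children) (hd : (l, d) ∈ w.children) :
    tpoly c = tpoly d := by
  classical
  cases v with
  | leaf => simp [children] at hc
  | node cs =>
  cases w with
  | leaf => simp [children] at hd
  | node ds =>
  let σ : L → MvPolynomial L ℝ := fun a => if a ≠ l ∧ a ∈ outLabels (.node cs) then 0 else X a
  have hfix {e : STree L} (hfe : ∀ a ∈ outLabels (.node cs), ¬ e.UsesLabel a) :
      ∀ a, e.UsesLabel a → σ a = X a := fun a ha =>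
    if_neg fun h => hfe a h.2 ha
  have hv_branch := aeval_tpoly_node (cs := cs) (σ := σ) hv hc (if_neg (by simp))
    (fun x hx hxl => if_pos ⟨hxl, List.mem_map_of_mem hx⟩) (hfix (hfv _ hc))
  have hw_branch := aeval_tpoly_node (cs := ds) (σ := σ) hw hd (if_neg (by simp))
    (fun x hx hxl => if_pos ⟨hxl, (hvw x.1).mpr (List.mem_map_of_mem hx)⟩)
    (hfix fun a ha => hfw _ hd a ((hvw a).mp ha))
  rw [heq, hw_branch] at hv_branch
  exact (mul_left_cancel₀ (X_ne_zero l) hv_branch).symm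

theorem IsStagedTree.nodup_outLabels {T v : STree L} {n : ℕ} (hT : IsStagedTree T)
    (hv : OccursAt T n v) : v.outLabels.Nodup := by
  cases v with
  | leaf => exact List.nodup_nil
  | node cs => exact (hT.1 n cs hv).2

/-- A label leaving `v` would put a vertex strictly below `v` in the stage of `v`. -/
theorem IsStagedTree.not_usesLabel_child {T v : STree L} {n : ℕ} (hT : IsStagedTree T)
    (hS : Stratified T) (hv : OccursAt T n v) :
    ∀ x ∈ v.children, ∀ a ∈ v.outLabels, ¬ x.2.UsesLabel a := by
  rintro ⟨l, c⟩ hc a ha ⟨k, u, hcu, hau⟩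
  cases v with
  | leaf => simp [children] at hc
  | node cs =>
  have hu : OccursAt T (n + (k + 1)) u := hv.trans (.child hc hcu)
  rcases hT.2 _ _ _ _ hv hu with hvu | hdisj
  · have := hS.2 _ _ _ _ hv hu hvu
    omega
  · exact hdisj a ⟨ha, hau⟩

end STree

open STree in
theorem stmt1 {L : Type} (T : STree L) (hst : IsStagedTree T) (hS : Stratified T)
    (hpos : ∀ n m v w, OccursAt T n v → OccursAt T m w → SameStage v w → tpoly v = tpoly w) :
    Balanced T := by
  intro n m v w hv hw hvw l l' c c' d d' _ hc hc' hd hd'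
  have hchild {l : L} {c d : STree L} (hc : (l, c) ∈ v.children) (hd : (l, d) ∈ w.children) :
      tpoly c = tpoly d :=
    tpoly_child_eq_of_tpoly_eq (hst.nodup_outLabels hv) (hst.nodup_outLabels hw) hvw
      (hst.not_usesLabel_child hS hv) (hst.not_usesLabel_child hS hw)
      (hpos n m v w hv hw hvw) hc hd
  rw [hchild hc hd, hchild hc' hd']
end

section
/- Let s, t be finite index sets and consider the toric ideal I_B = ker(φ_B) where φ_B : K[z_{jk} : j ∈ s, k ∈ t] → K[x_j, y_k : j ∈ s, k ∈ t] sends z_{jk} ↦ x_j·y_k. Then I_B is generated by the 2×2-minors Quad_B = { z_{j₁k₁}z_{j₂k₂} − z_{j₂k₁}z_{j₁k₂} : j₁, j₂ ∈ s, k₁, k₂ ∈ t }; moreover Quad_B is a Gröbner basis of I_B with respect to any term order selecting z_{j₁k₁}z_{j₂k₂} (with j₁ < j₂, k₁ < k₂ in fixed linear orders) as leading terms, and the initial ideal is squarefree. -/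
/-!
A monomial in the `z_{jk}` is an exponent matrix `m : s × t →₀ ℕ`, and `φ_B` sends it to the
monomial whose exponents are the row and column sums of `m` (`marginals m`). Call `m` standard if
no two entries of its support lie in strictly increasing position `j₁ < j₂`, `k₁ < k₂`.

A standard matrix is determined by its marginals: its entry in the first row and the last column is
nonzero, and removing it leaves a smaller standard matrix. Any other matrix admits a swap
`e_{j₁k₁} + e_{j₂k₂} ↦ e_{j₂k₁} + e_{j₁k₂}`, which keeps the marginals, changes the monomial by a
multiple of a minor, and decreases in the term order; as a fibre of the marginals is finite,
swapping terminates at a standard matrix. So every polynomial is congruent modulo the minors to a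
combination of standard monomials, on which `φ_B` is injective: the minors generate `I_B`.
Moreover the standard matrix is the least element of its fibre, so the leading monomial of an
element of `I_B` is never standard, i.e. it is divisible by the leading monomial
`z_{j₁k₁} z_{j₂k₂}` of a minor, which is squarefree.
-/

open MvPolynomial

/-- `m` is the leading monomial of `f` with respect to the monomial order `r`. -/
def IsLeadMon {K : Type} [CommRing K] {σ : Type} (r : (σ →₀ ℕ) → (σ →₀ ℕ) → Prop)
    (f : MvPolynomial σ K) (m : σ →₀ ℕ) : Prop :=
  m ∈ f.support ∧ ∀ m' ∈ f.support, m' ≠ m → r m' m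

namespace SegreToric

open Finsupp (single)

section Marginals

variable {s t : Type*}

noncomputable def marginals (m : s × t →₀ ℕ) : s ⊕ t →₀ ℕ :=
  Finsupp.sumElim (m.mapDomain Prod.fst) (m.mapDomain Prod.snd)

lemma marginals_add (m m' : s × t →₀ ℕ) : marginals (m + m') = marginals m + marginals m' := by
  ext (_ | _) <;> simp [marginals, Finsupp.mapDomain_add]

lemma marginals_single (p : s × t) (n : ℕ) :
    marginals (single p n) = single (Sum.inl p.1) n + single (Sum.inr p.2) n := by
  simp [marginals]

lemma marginals_swap (p q : s × t) :
    marginals (single p 1 + single q 1)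
      = marginals (single (q.1, p.2) 1 + single (p.1, q.2) 1) := by
  simp only [marginals_add, marginals_single]
  abel

variable {m m' : s × t →₀ ℕ}

lemma mapDomain_fst_eq_of_marginals_eq (h : marginals m = marginals m') :
    m.mapDomain Prod.fst = m'.mapDomain Prod.fst := by
  ext j
  simpa [marginals] using DFunLike.congr_fun h (Sum.inl j)

lemma mapDomain_snd_eq_of_marginals_eq (h : marginals m = marginals m') :
    m.mapDomain Prod.snd = m'.mapDomain Prod.snd := by
  ext k
  simpa [marginals] using DFunLike.congr_fun h (Sum.inr k)

lemma degree_eq_of_marginals_eq (h : marginals m = marginals m') : m.degree = m'.degree := by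
  rw [← Finsupp.degree_mapDomain Prod.fst, mapDomain_fst_eq_of_marginals_eq h,
    Finsupp.degree_mapDomain]

lemma image_fst_support_eq_of_marginals_eq [DecidableEq s] (h : marginals m = marginals m') :
    m.support.image Prod.fst = m'.support.image Prod.fst := by
  rw [← Finsupp.mapDomain_support_of_subsingletonAddUnits,
    ← Finsupp.mapDomain_support_of_subsingletonAddUnits, mapDomain_fst_eq_of_marginals_eq h]

lemma image_snd_support_eq_of_marginals_eq [DecidableEq t] (h : marginals m = marginals m') :
    m.support.image Prod.snd = m'.support.image Prod.snd := by
  rw [← Finsupp.mapDomain_support_of_subsingletonAddUnits,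
    ← Finsupp.mapDomain_support_of_subsingletonAddUnits, mapDomain_snd_eq_of_marginals_eq h]

lemma finite_setOf_marginals_eq (m : s × t →₀ ℕ) : {x | marginals x = marginals m}.Finite := by
  classical
  set B := m.support.image Prod.fst ×ˢ m.support.image Prod.snd
  refine (B.finsuppAntidiag m.degree).finite_toSet.subset
    fun x (hx : marginals x = marginals m) => ?_
  have hsupp : x.support ⊆ B := fun p hp =>
    Finset.mem_product.2 ⟨image_fst_support_eq_of_marginals_eq hx ▸ Finset.mem_image_of_mem _ hp,
      image_snd_support_eq_of_marginals_eq hx ▸ Finset.mem_image_of_mem _ hp⟩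
  rw [Finset.mem_coe, Finset.mem_finsuppAntidiag, ← degree_eq_of_marginals_eq hx,
    Finsupp.degree_apply]
  exact ⟨(Finset.sum_subset hsupp fun p _ hp => Finsupp.notMem_support_iff.1 hp).symm, hsupp⟩

end Marginals

lemma single_add_single_le {α : Type*} {m : α →₀ ℕ} {p q : α} (hp : p ∈ m.support)
    (hq : q ∈ m.support) (hpq : p ≠ q) : single p 1 + single q 1 ≤ m := by
  classical
  intro x
  rw [Finsupp.mem_support_iff] at hp hq
  simp only [Finsupp.coe_add, Pi.add_apply, Finsupp.single_apply]
  grind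

lemma single_add_single_apply_le_one {α : Type*} {p q : α} (hpq : p ≠ q) (x : α) :
    (single p 1 + single q 1 : α →₀ ℕ) x ≤ 1 := by
  classical
  simp only [Finsupp.coe_add, Pi.add_apply, Finsupp.single_apply]
  grind

section Standard

variable {s t : Type*} [LinearOrder s] [LinearOrder t] {m m' : s × t →₀ ℕ}

def IsStandard (m : s × t →₀ ℕ) : Prop :=
  ∀ p ∈ m.support, ∀ q ∈ m.support, p.1 < q.1 → ¬ p.2 < q.2

lemma IsStandard.of_le (hm' : IsStandard m') (h : m ≤ m') : IsStandard m :=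
  fun p hp q hq => hm' p (Finsupp.support_mono h hp) q (Finsupp.support_mono h hq)

lemma exists_of_not_isStandard (hm : ¬ IsStandard m) :
    ∃ p q : s × t, p.1 < q.1 ∧ p.2 < q.2 ∧ single p 1 + single q 1 ≤ m := by
  simp only [IsStandard, not_forall, not_not] at hm
  obtain ⟨p, hp, q, hq, h₁, h₂⟩ := hm
  exact ⟨p, q, h₁, h₂, single_add_single_le hp hq (ne_of_apply_ne Prod.fst h₁.ne)⟩

lemma IsStandard.single_min'_max'_le (hm : IsStandard m) {R : Finset s} {C : Finset t}
    (hR : m.support.image (Prod.fst : s × t → s) = R)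
    (hC : m.support.image (Prod.snd : s × t → t) = C)
    (hRne : R.Nonempty) (hCne : C.Nonempty) : single (R.min' hRne, C.max' hCne) 1 ≤ m := by
  subst hR hC
  rw [Finsupp.single_le_iff, Nat.one_le_iff_ne_zero, ← Finsupp.mem_support_iff]
  obtain ⟨p, hp, hpj⟩ := Finset.mem_image.1 (Finset.min'_mem _ hRne)
  obtain ⟨q, hq, hqk⟩ := Finset.mem_image.1 (Finset.max'_mem _ hCne)
  have hj : p.1 ≤ q.1 := hpj ▸ Finset.min'_le _ _ (Finset.mem_image_of_mem Prod.fst hq)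
  have hk : p.2 ≤ q.2 := hqk ▸ Finset.le_max' _ _ (Finset.mem_image_of_mem Prod.snd hp)
  rw [← hpj, ← hqk]
  rcases hj.lt_or_eq with hlt | heq
  · rwa [← hk.antisymm (not_lt.1 (hm p hp q hq hlt))]
  · rwa [heq]

lemma IsStandard.eq_of_marginals_eq (hm : IsStandard m) (hm' : IsStandard m')
    (h : marginals m = marginals m') : m = m' := by
  classical
  induction hn : m.degree generalizing m m' with
  | zero =>
    have hn' := hn
    rw [degree_eq_of_marginals_eq h] at hn'
    rw [Finsupp.degree_eq_zero_iff] at hn hn'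
    rw [hn, hn']
  | succ n ih =>
    have hne : m.support.Nonempty := by
      rw [Finsupp.support_nonempty_iff]
      rintro rfl
      simp at hn
    obtain ⟨c, hcm, hcm'⟩ : ∃ c : s × t, single c 1 ≤ m ∧ single c 1 ≤ m' :=
      ⟨_, hm.single_min'_max'_le rfl rfl (hne.image _) (hne.image _), hm'.single_min'_max'_le
        (image_fst_support_eq_of_marginals_eq h).symm (image_snd_support_eq_of_marginals_eq h).symm
        (hne.image _) (hne.image _)⟩
    obtain ⟨m₁, rfl⟩ := exists_add_of_le hcm
    obtain ⟨m₁', rfl⟩ := exists_add_of_le hcm'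
    rw [ih (hm.of_le le_add_self) (hm'.of_le le_add_self)
      (add_left_cancel (by simpa only [marginals_add] using h))
      (by rw [map_add, Finsupp.degree_single] at hn; omega)]

end Standard

section Polynomial

variable (K : Type*) [CommRing K] (s t : Type*)

noncomputable def segreMap : MvPolynomial (s × t) K →ₐ[K] MvPolynomial (s ⊕ t) K :=
  aeval fun x : s × t => X (Sum.inl x.1) * X (Sum.inr x.2)

def minors : Set (MvPolynomial (s × t) K) :=
  {f | ∃ (j₁ j₂ : s) (k₁ k₂ : t), f = X (j₁, k₁) * X (j₂, k₂) - X (j₂, k₁) * X (j₁, k₂)}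

variable {K s t}

lemma segreMap_monomial (m : s × t →₀ ℕ) (c : K) :
    segreMap K s t (monomial m c) = monomial (marginals m) c := by
  induction m using Finsupp.induction generalizing c with
  | zero => simp [segreMap, marginals]
  | single_add p n m _ _ ih =>
    rw [← mul_one c, ← monomial_mul, map_mul, ih, marginals_add, ← monomial_mul, marginals_single]
    congr 1
    rw [segreMap, aeval_monomial, Finsupp.prod_single_index (by simp), mul_pow, X_pow_eq_monomial,
      X_pow_eq_monomial, monomial_mul, one_mul, algebraMap_eq, C_mul_monomial, mul_one]

lemma coeff_marginals_segreMap {f : MvPolynomial (s × t) K} {m : s × t →₀ ℕ}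
    (h : ∀ m' ∈ f.support, marginals m' = marginals m → m' = m) :
    coeff (marginals m) (segreMap K s t f) = coeff m f := by
  classical
  conv_lhs => rw [← support_sum_monomial_coeff f]
  rw [map_sum, coeff_sum, Finset.sum_eq_single m]
  · rw [segreMap_monomial, coeff_monomial, if_pos rfl]
  · intro m' hm' hne
    rw [segreMap_monomial, coeff_monomial, if_neg (mt (h m' hm') hne)]
  · intro hm
    rw [segreMap_monomial, coeff_monomial, if_pos rfl, notMem_support_iff.1 hm]

noncomputable def minor (p q : s × t) : MvPolynomial (s × t) K :=
  X p * X q - X (q.1, p.2) * X (p.1, q.2)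

lemma minor_mem_minors (p q : s × t) : minor p q ∈ minors K s t :=
  ⟨p.1, q.1, p.2, q.2, rfl⟩

lemma minor_eq_monomial_sub (p q : s × t) :
    minor p q = monomial (single p 1 + single q 1) (1 : K)
      - monomial (single (q.1, p.2) 1 + single (p.1, q.2) 1) 1 := by
  simp only [minor, X, monomial_mul, one_mul]

lemma segreMap_minor (p q : s × t) : segreMap K s t (minor p q) = 0 := by
  simp only [minor, segreMap, map_sub, map_mul, aeval_X]
  ring

lemma span_minors_le_ker : Ideal.span (minors K s t) ≤ RingHom.ker (segreMap K s t).toRingHom := by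
  rw [Ideal.span_le]
  rintro _ ⟨j₁, j₂, k₁, k₂, rfl⟩
  exact segreMap_minor (j₁, k₁) (j₂, k₂)

lemma eq_of_mem_support_minor {p q : s × t} {m : s × t →₀ ℕ}
    (hm : m ∈ (minor p q : MvPolynomial (s × t) K).support) :
    m = single p 1 + single q 1 ∨ m = single (q.1, p.2) 1 + single (p.1, q.2) 1 := by
  classical
  rw [minor_eq_monomial_sub] at hm
  rcases Finset.mem_union.1 (support_sub _ _ _ hm) with h | h <;>
    simp only [Finset.mem_singleton.1 (support_monomial_subset h), true_or, or_true]

lemma apply_le_one_of_mem_support_minor {p q : s × t} {m : s × t →₀ ℕ}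
    (hm : m ∈ (minor p q : MvPolynomial (s × t) K).support) (x : s × t) : m x ≤ 1 := by
  obtain ⟨j, k⟩ := p
  obtain ⟨j', k'⟩ := q
  rcases eq_or_ne j j' with rfl | h
  · simp [minor] at hm
  · rcases eq_of_mem_support_minor hm with rfl | rfl
    · exact single_add_single_apply_le_one (by simp [h]) x
    · exact single_add_single_apply_le_one (by simp [h.symm]) x

end Polynomial

section Reduction

variable {s t : Type*} [LinearOrder s] [LinearOrder t] {K : Type*} [CommRing K]

lemma eq_zero_of_forall_isStandard {g : MvPolynomial (s × t) K}
    (hg : ∀ m ∈ g.support, IsStandard m) (h0 : segreMap K s t g = 0) : g = 0 := by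
  by_contra hne
  obtain ⟨m, hm⟩ := support_nonempty.2 hne
  apply mem_support_iff.1 hm
  rw [← coeff_marginals_segreMap fun m' hm' h => (hg m' hm').eq_of_marginals_eq (hg m hm) h, h0,
    coeff_zero]

def SwapStep (m m' : s × t →₀ ℕ) : Prop :=
  ∃ (p q : s × t) (n : s × t →₀ ℕ), p.1 < q.1 ∧ p.2 < q.2 ∧
    m = single p 1 + single q 1 + n ∧ m' = single (q.1, p.2) 1 + single (p.1, q.2) 1 + n

variable {m m' : s × t →₀ ℕ}

lemma exists_swapStep_of_not_isStandard (hm : ¬ IsStandard m) : ∃ m', SwapStep m m' := by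
  obtain ⟨p, q, h₁, h₂, hle⟩ := exists_of_not_isStandard hm
  obtain ⟨n, rfl⟩ := exists_add_of_le hle
  exact ⟨_, p, q, n, h₁, h₂, rfl, rfl⟩

lemma SwapStep.marginals_eq (h : SwapStep m m') : marginals m = marginals m' := by
  obtain ⟨p, q, n, -, -, rfl, rfl⟩ := h
  rw [marginals_add, marginals_swap, ← marginals_add]

lemma SwapStep.monomial_sub_mem_span (h : SwapStep m m') (c : K) :
    monomial m c - monomial m' c ∈ Ideal.span (minors K s t) := by
  obtain ⟨p, q, n, -, -, rfl, rfl⟩ := h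
  have : monomial (single p 1 + single q 1 + n) c
      - monomial (single (q.1, p.2) 1 + single (p.1, q.2) 1 + n) c = monomial n c * minor p q := by
    rw [minor_eq_monomial_sub, mul_sub, monomial_mul, monomial_mul, mul_one, add_comm n, add_comm n]
  rw [this]
  exact Ideal.mul_mem_left _ _ (Ideal.subset_span (minor_mem_minors p q))

lemma monomial_sub_mem_span_of_reflTransGen (h : Relation.ReflTransGen SwapStep m m') (c : K) :
    monomial m c - monomial m' c ∈ Ideal.span (minors K s t) := by
  induction h with
  | refl => simp
  | tail _ h ih => simpa using add_mem ih (h.monomial_sub_mem_span c)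

lemma marginals_eq_of_reflTransGen (h : Relation.ReflTransGen SwapStep m m') :
    marginals m = marginals m' := by
  induction h with
  | refl => rfl
  | tail _ h ih => exact ih.trans h.marginals_eq

variable {r : (s × t →₀ ℕ) → (s × t →₀ ℕ) → Prop} (hadd : ∀ a b c, r a b → r (a + c) (b + c))
  (hsel : ∀ (j₁ j₂ : s) (k₁ k₂ : t), j₁ < j₂ → k₁ < k₂ →
    r (single (j₂, k₁) 1 + single (j₁, k₂) 1) (single (j₁, k₁) 1 + single (j₂, k₂) 1))
include hadd hsel

lemma SwapStep.rel (h : SwapStep m m') : r m' m := by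
  obtain ⟨p, q, n, h₁, h₂, rfl, rfl⟩ := h
  exact hadd _ _ n (hsel _ _ _ _ h₁ h₂)

lemma eq_or_rel_of_reflTransGen [IsTrans _ r] (h : Relation.ReflTransGen SwapStep m m') :
    m' = m ∨ r m' m := by
  induction h with
  | refl => exact .inl rfl
  | tail _ h ih =>
    rcases ih with rfl | ih
    · exact .inr (h.rel hadd hsel)
    · exact .inr (_root_.trans (h.rel hadd hsel) ih)

lemma exists_isStandard_reflTransGen [IsStrictOrder _ r] (m : s × t →₀ ℕ) :
    ∃ m₀, IsStandard m₀ ∧ Relation.ReflTransGen SwapStep m m₀ := by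
  refine ((finite_setOf_marginals_eq m).wellFoundedOn (r := r)).induction
    (P := fun x => ∃ m₀, IsStandard m₀ ∧ Relation.ReflTransGen SwapStep x m₀) rfl ?_
  intro x hx ih
  by_cases hxs : IsStandard x
  · exact ⟨x, hxs, .refl⟩
  obtain ⟨x', hxx'⟩ := exists_swapStep_of_not_isStandard hxs
  obtain ⟨m₀, hm₀, hx'm₀⟩ := ih x' (hxx'.marginals_eq.symm.trans hx) (hxx'.rel hadd hsel)
  exact ⟨m₀, hm₀, .head hxx' hx'm₀⟩

lemma IsStandard.rel_of_marginals_eq [IsStrictOrder _ r] (hm : IsStandard m)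
    (h : marginals m' = marginals m) (hne : m' ≠ m) : r m m' := by
  obtain ⟨m₀, hm₀, hm'm₀⟩ := exists_isStandard_reflTransGen hadd hsel m'
  obtain rfl := hm₀.eq_of_marginals_eq hm ((marginals_eq_of_reflTransGen hm'm₀).symm.trans h)
  exact (eq_or_rel_of_reflTransGen hadd hsel hm'm₀).resolve_left hne.symm

lemma exists_isStandard_sub_mem_span [IsStrictOrder _ r] (f : MvPolynomial (s × t) K) :
    ∃ g, (∀ m ∈ g.support, IsStandard m) ∧ f - g ∈ Ideal.span (minors K s t) := by
  induction f using MvPolynomial.induction_on' with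
  | monomial m c =>
    obtain ⟨m₀, hm₀, hmm₀⟩ := exists_isStandard_reflTransGen hadd hsel m
    refine ⟨monomial m₀ c, fun m' hm' => ?_, monomial_sub_mem_span_of_reflTransGen hmm₀ c⟩
    rwa [Finset.mem_singleton.1 (support_monomial_subset hm')]
  | add f₁ f₂ ih₁ ih₂ =>
    obtain ⟨g₁, hg₁, hfg₁⟩ := ih₁
    obtain ⟨g₂, hg₂, hfg₂⟩ := ih₂
    refine ⟨g₁ + g₂, fun m hm => ?_, by simpa [add_sub_add_comm] using add_mem hfg₁ hfg₂⟩
    classical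
    exact (Finset.mem_union.1 (support_add hm)).elim (hg₁ m) (hg₂ m)

lemma ker_segreMap [IsStrictOrder _ r] :
    RingHom.ker (segreMap K s t).toRingHom = Ideal.span (minors K s t) := by
  refine le_antisymm (fun f hf => ?_) span_minors_le_ker
  obtain ⟨g, hg, hfg⟩ := exists_isStandard_sub_mem_span hadd hsel f
  have hf' : segreMap K s t f = 0 := hf
  have hg0 : g = 0 := eq_zero_of_forall_isStandard hg <| by
    simpa [hf'] using RingHom.mem_ker.1 (span_minors_le_ker hfg)
  simpa [hg0] using hfg

end Reduction

section LeadingMonomials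

variable {K σ : Type} [CommRing K] (r : (σ →₀ ℕ) → (σ →₀ ℕ) → Prop)

noncomputable def leadingMonomialIdeal (S : Set (MvPolynomial σ K)) : Ideal (MvPolynomial σ K) :=
  Ideal.span {g | ∃ f ∈ S, f ≠ 0 ∧ ∃ m, IsLeadMon r f m ∧ g = monomial m 1}

lemma leadingMonomialIdeal_mono {S T : Set (MvPolynomial σ K)} (h : S ⊆ T) :
    leadingMonomialIdeal r S ≤ leadingMonomialIdeal r T :=
  Ideal.span_mono fun _ ⟨f, hf, hf0, m, hm, hg⟩ => ⟨f, h hf, hf0, m, hm, hg⟩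

end LeadingMonomials

section GroebnerBasis

variable {K s t : Type} [CommRing K] [LinearOrder s] [LinearOrder t]
  {r : (s × t →₀ ℕ) → (s × t →₀ ℕ) → Prop} (hadd : ∀ a b c, r a b → r (a + c) (b + c))
  (hsel : ∀ (j₁ j₂ : s) (k₁ k₂ : t), j₁ < j₂ → k₁ < k₂ →
    r (single (j₂, k₁) 1 + single (j₁, k₂) 1) (single (j₁, k₁) 1 + single (j₂, k₂) 1))

include hsel in
lemma isLeadMon_minor [Nontrivial K] {p q : s × t} (h₁ : p.1 < q.1) (h₂ : p.2 < q.2) :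
    IsLeadMon r (minor p q : MvPolynomial (s × t) K) (single p 1 + single q 1) := by
  have hne : single (q.1, p.2) 1 + single (p.1, q.2) 1 ≠ single p 1 + single q 1 := by
    intro e
    have := DFunLike.congr_fun e p
    simp [Prod.ext_iff, h₁.ne, h₂.ne] at this
  refine ⟨?_, fun m hm hm_ne => ?_⟩
  · rw [mem_support_iff, minor_eq_monomial_sub, coeff_sub, coeff_monomial, coeff_monomial,
      if_pos rfl, if_neg hne, sub_zero]
    exact one_ne_zero
  · rcases eq_of_mem_support_minor hm with rfl | rfl
    · exact absurd rfl hm_ne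
    · exact hsel _ _ _ _ h₁ h₂

include hadd hsel in
lemma not_isStandard_of_isLeadMon [IsStrictOrder _ r] {f : MvPolynomial (s × t) K}
    (hf : segreMap K s t f = 0) {m : s × t →₀ ℕ} (hlm : IsLeadMon r f m) : ¬ IsStandard m := by
  intro hm
  have hunique : ∀ m' ∈ f.support, marginals m' = marginals m → m' = m := fun m' hm' h => by
    by_contra hne
    exact irrefl m (_root_.trans (hm.rel_of_marginals_eq hadd hsel h hne) (hlm.2 m' hm' hne))
  apply mem_support_iff.1 hlm.1
  rw [← coeff_marginals_segreMap hunique, hf, coeff_zero]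

include hadd hsel in
lemma leadingMonomialIdeal_ker_le [Nontrivial K] [IsStrictOrder _ r] :
    leadingMonomialIdeal r (RingHom.ker (segreMap K s t).toRingHom)
      ≤ leadingMonomialIdeal r (minors K s t) := by
  refine Ideal.span_le.2 fun _ ⟨f, hf, _, m, hlm, hg⟩ => ?_
  obtain ⟨p, q, h₁, h₂, hle⟩ :=
    exists_of_not_isStandard (not_isStandard_of_isLeadMon hadd hsel hf hlm)
  obtain ⟨n, rfl⟩ := exists_add_of_le hle
  have hlead := isLeadMon_minor (K := K) hsel h₁ h₂
  rw [hg, ← one_mul (1 : K), ← monomial_mul]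
  exact Ideal.mul_mem_right _ _ (Ideal.subset_span
    ⟨_, minor_mem_minors p q, support_nonempty.1 ⟨_, hlead.1⟩, _, hlead, rfl⟩)

end GroebnerBasis

end SegreToric

theorem stmt7_general {K : Type} [Field K] {s t : Type} [LinearOrder s] [LinearOrder t]
    (r : ((s × t) →₀ ℕ) → ((s × t) →₀ ℕ) → Prop)
    (hord : IsStrictTotalOrder ((s × t) →₀ ℕ) r)
    (hadd : ∀ a b c, r a b → r (a + c) (b + c))
    (hsel : ∀ (j₁ j₂ : s) (k₁ k₂ : t), j₁ < j₂ → k₁ < k₂ →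
      r (Finsupp.single (j₂, k₁) 1 + Finsupp.single (j₁, k₂) 1)
        (Finsupp.single (j₁, k₁) 1 + Finsupp.single (j₂, k₂) 1)) :
    letI φ : MvPolynomial (s × t) K →ₐ[K] MvPolynomial (s ⊕ t) K :=
      MvPolynomial.aeval (fun x : s × t => X (Sum.inl x.1) * X (Sum.inr x.2))
    letI I : Ideal (MvPolynomial (s × t) K) := RingHom.ker φ.toRingHom
    letI Quad : Set (MvPolynomial (s × t) K) :=
      {f | ∃ (j₁ j₂ : s) (k₁ k₂ : t),
        f = X (j₁, k₁) * X (j₂, k₂) - X (j₂, k₁) * X (j₁, k₂)}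
    -- generation
    I = Ideal.span Quad ∧
    -- Gröbner basis property: the leading monomials of the minors generate the initial ideal
    Ideal.span {g : MvPolynomial (s × t) K |
        ∃ f ∈ Quad, f ≠ 0 ∧ ∃ m, IsLeadMon r f m ∧ g = monomial m 1}
      = Ideal.span {g : MvPolynomial (s × t) K |
        ∃ f ∈ I, f ≠ 0 ∧ ∃ m, IsLeadMon r f m ∧ g = monomial m 1} ∧
    -- squarefree initial ideal
    (∀ f ∈ Quad, ∀ m, IsLeadMon r f m → ∀ v, m v ≤ 1) := by
  open SegreToric in
  have := hord
  refine ⟨ker_segreMap hadd hsel, ?_, ?_⟩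
  · exact le_antisymm (leadingMonomialIdeal_mono r (Ideal.subset_span.trans span_minors_le_ker))
      (leadingMonomialIdeal_ker_le hadd hsel)
  · rintro _ ⟨j₁, j₂, k₁, k₂, rfl⟩ m hlm
    exact apply_le_one_of_mem_support_minor (p := (j₁, k₁)) (q := (j₂, k₂)) hlm.1

/-- The toric ideal of the Segre embedding `z_{jk} ↦ x_j y_k` is generated by the 2×2 minors;
moreover the minors form a Gröbner basis with respect to any monomial order selecting
`z_{j₁k₁} z_{j₂k₂}` (with `j₁ < j₂`, `k₁ < k₂`) as leading terms, and the initial ideal is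
squarefree. -/
theorem stmt7 {K : Type} [Field K] {s t : Type} [LinearOrder s] [LinearOrder t]
    (r : ((s × t) →₀ ℕ) → ((s × t) →₀ ℕ) → Prop)
    (hord : IsStrictTotalOrder ((s × t) →₀ ℕ) r)
    (hadd : ∀ a b c, r a b → r (a + c) (b + c))
    (hzero : ∀ a, a ≠ 0 → r 0 a)
    (hsel : ∀ (j₁ j₂ : s) (k₁ k₂ : t), j₁ < j₂ → k₁ < k₂ →
      r (Finsupp.single (j₂, k₁) 1 + Finsupp.single (j₁, k₂) 1)
        (Finsupp.single (j₁, k₁) 1 + Finsupp.single (j₂, k₂) 1)) :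
    letI φ : MvPolynomial (s × t) K →ₐ[K] MvPolynomial (s ⊕ t) K :=
      MvPolynomial.aeval (fun x : s × t => X (Sum.inl x.1) * X (Sum.inr x.2))
    letI I : Ideal (MvPolynomial (s × t) K) := RingHom.ker φ.toRingHom
    letI Quad : Set (MvPolynomial (s × t) K) :=
      {f | ∃ (j₁ j₂ : s) (k₁ k₂ : t),
        f = X (j₁, k₁) * X (j₂, k₂) - X (j₂, k₁) * X (j₁, k₂)}
    -- generation
    I = Ideal.span Quad ∧
    -- Gröbner basis property: the leading monomials of the minors generate the initial ideal
    Ideal.span {g : MvPolynomial (s × t) K |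
        ∃ f ∈ Quad, f ≠ 0 ∧ ∃ m, IsLeadMon r f m ∧ g = monomial m 1}
      = Ideal.span {g : MvPolynomial (s × t) K |
        ∃ f ∈ I, f ≠ 0 ∧ ∃ m, IsLeadMon r f m ∧ g = monomial m 1} ∧
    -- squarefree initial ideal
    (∀ f ∈ Quad, ∀ m, IsLeadMon r f m → ∀ v, m v ≤ 1) :=
  stmt7_general r hord hadd hsel
end

section
/- Let (T, θ) be a staged tree, G = {G₁,…,G_r} a partition of the leaf set of T, and T_G a gluing component consisting of one-level trees (B_i, t^{(i)}) with pairwise disjoint new label sets. Let [T, T_G] be the staged tree obtained by attaching a copy of B_i to each leaf in G_i. If the toric ideal ker(φ_T) ⊆ R[p]_T is homogeneous with respect to the multigrading A assigning degree e_i ∈ Z^r to each variable p_j with j ∈ G_i, then ker(φ_{[T,T_G]}) equals the toric fiber product ker(φ_T) ×_A ⟨0⟩, i.e. the kernel of the map ψ : R[p]_{[T,T_G]} → (R[p]_T/ker φ_T) ⊗_R R[p]_{T_G} sending p_{jk}^i ↦ p̄_j^i ⊗ p̄_k^i. -/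
open MvPolynomial TensorProduct

/-!
Since `R[p]_{T_G}` is a polynomial ring in the leaves `k` of the `B_i`,
`(R[p]_T ⧸ ker φ_T) ⊗_R R[p]_{T_G}` is the polynomial ring `(R[p]_T ⧸ ker φ_T)[p_k]`, and `φ_T`
induces an embedding of it into `R[z, L][t_k] = R[z, L ⊔ t]`, the labels `t` being fresh.
Under this embedding `ψ` becomes `φ_{[T,T_G]}`, so the two maps have the same kernel.
-/

def Equiv.optionSumEquivSumOption (L S : Type*) : Option (L ⊕ S) ≃ S ⊕ Option L where
  toFun
    | none => .inr none
    | some (.inl l) => .inr (some l)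
    | some (.inr s) => .inl s
  invFun
    | .inr none => none
    | .inr (some l) => some (.inl l)
    | .inl s => some (.inr s)
  left_inv := by rintro (_ | _ | _) <;> rfl
  right_inv := by rintro (_ | _ | _) <;> rfl

theorem AlgHom.ker_eq_ker_of_comp_eq {R A B C : Type*} [CommSemiring R] [Semiring A] [Semiring B]
    [Semiring C] [Algebra R A] [Algebra R B] [Algebra R C] {f : A →ₐ[R] B} {g : A →ₐ[R] C}
    (e : B →ₐ[R] C) (he : Function.Injective e) (h : e.comp f = g) :
    RingHom.ker f = RingHom.ker g := by
  subst h
  ext x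
  simp only [RingHom.mem_ker, AlgHom.comp_apply, map_eq_zero_iff e he]

namespace MvPolynomial

section KerLiftTensor

variable {R A B : Type*} [CommSemiring R] [CommRing A] [CommSemiring B] [Algebra R A] [Algebra R B]
  (φ : A →ₐ[R] B) (S : Type*)

noncomputable def kerLiftTensor :
    (A ⧸ RingHom.ker φ) ⊗[R] MvPolynomial S R →ₐ[R] MvPolynomial S B :=
  (mapAlgHom (Ideal.kerLiftAlg φ)).comp
    ((algebraTensorAlgEquiv R (A ⧸ RingHom.ker φ)).toAlgHom.restrictScalars R)

theorem kerLiftTensor_injective : Function.Injective (kerLiftTensor φ S) :=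
  (map_injective _ (Ideal.kerLiftAlg_injective φ)).comp (AlgEquiv.injective _)

theorem kerLiftTensor_mk_tmul_X (a : A) (s : S) :
    kerLiftTensor φ S (Ideal.Quotient.mk _ a ⊗ₜ X s) = C (φ a) * X s := by
  have htmul := algebraTensorAlgEquiv_tmul (R := R) (A := A ⧸ RingHom.ker φ)
    (Ideal.Quotient.mk (RingHom.ker φ) a) (X s : MvPolynomial S R)
  rw [kerLiftTensor, AlgHom.comp_apply, AlgHom.restrictScalars_apply]
  erw [htmul]
  rw [map_X, smul_eq_C_mul, map_mul, mapAlgHom_apply, mapAlgHom_apply, map_C, map_X]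
  exact congrArg (C · * X s) (Ideal.kerLiftAlg_mk φ a)

variable {φ S} in
theorem ker_aeval_mk_tmul_X {σ : Type*} (a : σ → A) (s : σ → S) :
    RingHom.ker (aeval (R := R) fun i =>
        Ideal.Quotient.mk (RingHom.ker φ) (a i) ⊗ₜ[R] (X (s i) : MvPolynomial S R)) =
      RingHom.ker (aeval (R := R) fun i => C (φ (a i)) * (X (s i) : MvPolynomial S B)) := by
  have hcomp : (kerLiftTensor φ S).comp (aeval fun i =>
      Ideal.Quotient.mk (RingHom.ker φ) (a i) ⊗ₜ[R] (X (s i) : MvPolynomial S R)) =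
      aeval fun i => C (φ (a i)) * X (s i) :=
    algHom_ext fun i => by simp [kerLiftTensor_mk_tmul_X]
  exact AlgHom.ker_eq_ker_of_comp_eq _ (kerLiftTensor_injective φ S) hcomp

end KerLiftTensor

section SplitLabels

variable {R L S : Type*} [CommSemiring R]

variable (R L S) in
noncomputable def splitOptionSum :
    MvPolynomial (Option (L ⊕ S)) R ≃ₐ[R] MvPolynomial S (MvPolynomial (Option L) R) :=
  (renameEquiv R (Equiv.optionSumEquivSumOption L S)).trans (sumAlgEquiv R S (Option L))

theorem splitOptionSum_X_some_inr (s : S) :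
    splitOptionSum R L S (X (some (.inr s))) = X s := by
  simp [splitOptionSum, Equiv.optionSumEquivSumOption]

theorem splitOptionSum_rename_map_inl (p : MvPolynomial (Option L) R) :
    splitOptionSum R L S (rename (Option.map Sum.inl) p) = C p := by
  have : (splitOptionSum R L S).toAlgHom.comp (rename (Option.map Sum.inl)) =
      IsScalarTower.toAlgHom R _ _ :=
    algHom_ext fun i => by cases i <;> simp [splitOptionSum, Equiv.optionSumEquivSumOption]
  exact congr($this p)

theorem ker_aeval_rename_mul_X {σ : Type*} (q : σ → MvPolynomial (Option L) R) (s : σ → S) :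
    RingHom.ker (aeval (R := R) fun i =>
        rename (Option.map Sum.inl) (q i) * X (some (.inr (s i)))) =
      RingHom.ker (aeval (R := R) fun i => C (q i) * (X (s i) : MvPolynomial S _)) := by
  have hcomp : (splitOptionSum R L S).toAlgHom.comp (aeval fun i =>
      rename (Option.map Sum.inl) (q i) * X (some (.inr (s i)))) =
      aeval fun i => C (q i) * X (s i) :=
    algHom_ext fun i => by
      simp [splitOptionSum_rename_map_inl, splitOptionSum_X_some_inr]
  exact AlgHom.ker_eq_ker_of_comp_eq _ (splitOptionSum R L S).injective hcomp

end SplitLabels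

end MvPolynomial

theorem stmt8_general {ι L : Type} {r : ℕ} (G : ι → Fin r) {κ : Fin r → Type}
    (m : ι → (L →₀ ℕ))
    -- the toric map of T (with homogenizing variable `none`)
    (φT : MvPolynomial ι ℝ →ₐ[ℝ] MvPolynomial (Option L) ℝ)
    (hφT : φT = MvPolynomial.aeval (fun j =>
      X (none : Option L) * monomial (Finsupp.mapDomain Option.some (m j)) 1))
    -- the toric map of the glued tree [T, T_G]
    (φG : MvPolynomial (Σ j : ι, κ (G j)) ℝ →ₐ[ℝ]
      MvPolynomial (Option (L ⊕ (Σ i : Fin r, κ i))) ℝ)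
    (hφG : φG = MvPolynomial.aeval (fun jk : Σ j : ι, κ (G j) =>
      X (none : Option (L ⊕ (Σ i : Fin r, κ i)))
        * monomial (Finsupp.mapDomain (fun l => Option.some (Sum.inl l)) (m jk.1)) 1
        * X (Option.some (Sum.inr ⟨G jk.1, jk.2⟩))))
    -- the toric fiber product map ψ : p_{jk} ↦ p̄_j ⊗ p̄_k
    (ψ : MvPolynomial (Σ j : ι, κ (G j)) ℝ →ₐ[ℝ]
      ((MvPolynomial ι ℝ ⧸ RingHom.ker φT.toRingHom) ⊗[ℝ] MvPolynomial (Σ i : Fin r, κ i) ℝ))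
    (hψ : ψ = MvPolynomial.aeval (R := ℝ) (fun jk : Σ j : ι, κ (G j) =>
      (Ideal.Quotient.mk (RingHom.ker φT.toRingHom) (X jk.1)) ⊗ₜ[ℝ]
        (X (R := ℝ) (⟨G jk.1, jk.2⟩ : Σ i : Fin r, κ i)))) :
    RingHom.ker φG.toRingHom = RingHom.ker ψ.toRingHom := by
  have hφG' : φG = aeval fun jk : Σ j : ι, κ (G j) =>
      rename (Option.map Sum.inl) (φT (X jk.1)) * X (some (.inr ⟨G jk.1, jk.2⟩)) := by
    rw [hφG, hφT]
    congr 1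
    funext jk
    rw [aeval_X, map_mul, rename_X, rename_monomial, ← Finsupp.mapDomain_comp]
    rfl
  rw [hφG', hψ]
  exact (ker_aeval_rename_mul_X _ _).trans (ker_aeval_mk_tmul_X _ _).symm

/-- Toric fiber product construction for staged trees (Proposition `lem:tfp`):
`T` has leaves `ι`, each leaf `j` contributing the monomial `z · θ^(m j)`; `G : ι → Fin r` is
the partition of the leaves, and the one-level tree `B_i` glued along `G_i` has leaves `κ i`,
whose labels are fresh indeterminates.  If the toric ideal `ker φ_T` is homogeneous for the
multigrading `deg p_j = e_{G j}`, then the toric ideal of the glued tree `[T, T_G]` equals the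
toric fiber product `ker φ_T ×_A ⟨0⟩`, i.e. the kernel of
`ψ : p_{jk} ↦ p̄_j ⊗ p̄_k`. -/
theorem stmt8 {ι L : Type} {r : ℕ} (G : ι → Fin r) {κ : Fin r → Type}
    (m : ι → (L →₀ ℕ))
    -- the toric map of T (with homogenizing variable `none`)
    (φT : MvPolynomial ι ℝ →ₐ[ℝ] MvPolynomial (Option L) ℝ)
    (hφT : φT = MvPolynomial.aeval (fun j =>
      X (none : Option L) * monomial (Finsupp.mapDomain Option.some (m j)) 1))
    -- the toric map of the glued tree [T, T_G]
    (φG : MvPolynomial (Σ j : ι, κ (G j)) ℝ →ₐ[ℝ]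
      MvPolynomial (Option (L ⊕ (Σ i : Fin r, κ i))) ℝ)
    (hφG : φG = MvPolynomial.aeval (fun jk : Σ j : ι, κ (G j) =>
      X (none : Option (L ⊕ (Σ i : Fin r, κ i)))
        * monomial (Finsupp.mapDomain (fun l => Option.some (Sum.inl l)) (m jk.1)) 1
        * X (Option.some (Sum.inr ⟨G jk.1, jk.2⟩))))
    -- the toric fiber product map ψ : p_{jk} ↦ p̄_j ⊗ p̄_k
    (ψ : MvPolynomial (Σ j : ι, κ (G j)) ℝ →ₐ[ℝ]
      ((MvPolynomial ι ℝ ⧸ RingHom.ker φT.toRingHom) ⊗[ℝ] MvPolynomial (Σ i : Fin r, κ i) ℝ))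
    (hψ : ψ = MvPolynomial.aeval (R := ℝ) (fun jk : Σ j : ι, κ (G j) =>
      (Ideal.Quotient.mk (RingHom.ker φT.toRingHom) (X jk.1)) ⊗ₜ[ℝ]
        (X (R := ℝ) (⟨G jk.1, jk.2⟩ : Σ i : Fin r, κ i))))
    -- homogeneity of ker φ_T with respect to the multigrading deg p_j = e_{G j}
    (hhom : ∀ f ∈ RingHom.ker φT.toRingHom, ∀ d : Fin r →₀ ℕ,
      weightedHomogeneousComponent (fun j => Finsupp.single (G j) (1 : ℕ)) d f
        ∈ RingHom.ker φT.toRingHom) :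
    RingHom.ker φG.toRingHom = RingHom.ker ψ.toRingHom :=
  stmt8_general G m φT hφT φG hφG ψ hψ
end
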